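/- arXiv:2207.11730 — 2 statements merged into one kernel-verified Lean document; each statement's English description precedes it below -/
import Mathlib

section
/- Let q be even and let f: {0,1}^m → ℤ_q be any function with associated sequence 𝐟 = (f_0,...,f_{2^m−1}) where f_r = f(r_1,...,r_m). For the 2^{k+1} sequences 𝐚_σ = 𝐟 + (q/2)(Σ_{β=1}^k σ_β x_{π_β(1)} + σ_{k+1} x_m) indexed by σ ∈ {0,1}^{k+1}, if two indices r, s < 2^m satisfy r_{π_β(1)} ≠ s_{π_β(1)} for some β ∈ {1,...,k}, then for every σ there exists σ' (namely σ with the β-th coordinate flipped) with ω^{a_{σ,r} − a_{σ,s}} + ω^{a_{σ',r} − a_{σ',s}} = 0. -/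
/-- bit i (zero-based) of n, as a natural number in {0,1} -/
def bitv (n i : ℕ) : ℕ := n / 2 ^ i % 2

lemma bitv_lt (n i : ℕ) : bitv n i < 2 := Nat.mod_lt _ two_pos

lemma bitv_testBit (n i : ℕ) : bitv n i = (n.testBit i).toNat :=
  (Nat.toNat_testBit n i).symm

lemma bitv_flip_self (σ β : ℕ) : bitv (σ ^^^ 2 ^ β) β = 1 - bitv σ β := by
  simp only [bitv_testBit, Nat.testBit_xor, Nat.testBit_two_pow_self]
  cases h : σ.testBit β <;> simp

lemma bitv_flip_ne (σ β j : ℕ) (h : j ≠ β) : bitv (σ ^^^ 2 ^ β) j = bitv σ j := by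
  simp only [bitv_testBit, Nat.testBit_xor]
  rw [Nat.testBit_two_pow_of_ne (Ne.symm h)]
  simp

theorem stmt_5 (q m k : ℕ) (hq : Even q) (hq0 : 0 < q) (hk : 0 < k) (hm : 2 ≤ m)
    (p : Fin k → ℕ)  -- p β = π_β(1)
    (hp : Function.Injective p) (hpr : ∀ β, 1 ≤ p β ∧ p β ≤ m - 1)
    (f : ℕ → ZMod q)
    (a : ℕ → ℕ → ZMod q)
    (ha : ∀ σ r, a σ r = f r + ((q / 2 : ℕ) : ZMod q) *
        ((∑ β : Fin k, (bitv σ β.val : ZMod q) * (bitv r (p β - 1) : ZMod q)) +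
          (bitv σ k : ZMod q) * (bitv r (m - 1) : ZMod q)))
    (r s : ℕ) (hr : r < 2 ^ m) (hs : s < 2 ^ m)
    (hdiff : ∃ β : Fin k, bitv r (p β - 1) ≠ bitv s (p β - 1)) :
    ∀ σ < 2 ^ (k + 1), ∃ σ' < 2 ^ (k + 1),
      Complex.exp (2 * Real.pi * Complex.I / q) ^ (a σ r - a σ s).val +
        Complex.exp (2 * Real.pi * Complex.I / q) ^ (a σ' r - a σ' s).val = 0 := by
  haveI : NeZero q := ⟨hq0.ne'⟩
  have h2q : 2 ∣ q := hq.two_dvd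
  obtain ⟨β0, hβ0⟩ := hdiff
  intro σ hσ
  set σ' : ℕ := σ ^^^ 2 ^ (β0 : ℕ) with hσ'def
  have hσ'lt : σ' < 2 ^ (k + 1) := by
    refine Nat.xor_lt_two_pow hσ ?_
    exact Nat.pow_lt_pow_right one_lt_two (by omega)
  refine ⟨σ', hσ'lt, ?_⟩
  -- c := q/2 in ZMod q
  have hcc : ((q / 2 : ℕ) : ZMod q) + ((q / 2 : ℕ) : ZMod q) = 0 := by
    have h1 : q / 2 + q / 2 = q := by omega
    calc ((q / 2 : ℕ) : ZMod q) + ((q / 2 : ℕ) : ZMod q)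
        = ((q / 2 + q / 2 : ℕ) : ZMod q) := by push_cast; ring
    _ = ((q : ℕ) : ZMod q) := by rw [h1]
    _ = 0 := ZMod.natCast_self q
  -- rewrite the sums for σ'
  have hsum : ∀ x : ℕ,
      (∑ β : Fin k, (bitv σ' β.val : ZMod q) * (bitv x (p β - 1) : ZMod q))
        = (∑ β : Fin k, (bitv σ β.val : ZMod q) * (bitv x (p β - 1) : ZMod q))
          + ((bitv σ' (β0 : ℕ) : ZMod q) - (bitv σ (β0 : ℕ) : ZMod q))
            * (bitv x (p β0 - 1) : ZMod q) := by
    intro x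
    have hterm : ∀ β : Fin k,
        (bitv σ' β.val : ZMod q) * (bitv x (p β - 1) : ZMod q)
          = (bitv σ β.val : ZMod q) * (bitv x (p β - 1) : ZMod q)
            + (if β = β0 then ((bitv σ' (β0 : ℕ) : ZMod q) - (bitv σ (β0 : ℕ) : ZMod q))
                * (bitv x (p β0 - 1) : ZMod q) else 0) := by
      intro β
      by_cases h : β = β0
      · subst h; rw [if_pos rfl]; ring
      · have hne : (β : ℕ) ≠ (β0 : ℕ) := fun hh => h (Fin.ext hh)
        rw [hσ'def, bitv_flip_ne σ (β0 : ℕ) (β : ℕ) hne]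
        simp [h]
    rw [Finset.sum_congr rfl (fun β _ => hterm β), Finset.sum_add_distrib]
    simp
  have hbk : bitv σ' k = bitv σ k := by
    exact bitv_flip_ne σ (β0 : ℕ) k (by have := β0.isLt; omega)
  -- key algebraic identity
  have key : a σ' r - a σ' s = (a σ r - a σ s) + ((q / 2 : ℕ) : ZMod q) := by
    rw [ha σ' r, ha σ' s, ha σ r, ha σ s, hsum r, hsum s, hbk]
    have hflip : bitv σ' (β0 : ℕ) = 1 - bitv σ (β0 : ℕ) := bitv_flip_self σ (β0 : ℕ)
    have hd := bitv_lt σ (β0 : ℕ)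
    have hbr := bitv_lt r (p β0 - 1)
    have hbs := bitv_lt s (p β0 - 1)
    have hd0 : bitv σ (β0 : ℕ) = 0 ∨ bitv σ (β0 : ℕ) = 1 := by
      have := bitv_lt σ (β0 : ℕ); omega
    have hbr0 : bitv r (p β0 - 1) = 0 ∨ bitv r (p β0 - 1) = 1 := by
      have := bitv_lt r (p β0 - 1); omega
    have hbs0 : bitv s (p β0 - 1) = 0 ∨ bitv s (p β0 - 1) = 1 := by
      have := bitv_lt s (p β0 - 1); omega
    rcases hd0 with hdd | hdd <;> rcases hbr0 with hbrr | hbrr <;>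
        rcases hbs0 with hbss | hbss
    · exact absurd (hbrr.trans hbss.symm) hβ0
    · simp only [hflip, hdd, hbrr, hbss, Nat.sub_self, Nat.sub_zero, Nat.cast_one, Nat.cast_zero]
      linear_combination -hcc
    · simp only [hflip, hdd, hbrr, hbss, Nat.sub_self, Nat.sub_zero, Nat.cast_one, Nat.cast_zero]
      ring
    · exact absurd (hbrr.trans hbss.symm) hβ0
    · exact absurd (hbrr.trans hbss.symm) hβ0
    · simp only [hflip, hdd, hbrr, hbss, Nat.sub_self, Nat.sub_zero, Nat.cast_one, Nat.cast_zero]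
      ring
    · simp only [hflip, hdd, hbrr, hbss, Nat.sub_self, Nat.sub_zero, Nat.cast_one, Nat.cast_zero]
      linear_combination -hcc
    · exact absurd (hbrr.trans hbss.symm) hβ0
  rw [key]
  -- exponential part
  set ω : ℂ := Complex.exp (2 * Real.pi * Complex.I / q) with hωdef
  have hqC : (q : ℂ) ≠ 0 := Nat.cast_ne_zero.mpr hq0.ne'
  have hωq : ω ^ q = 1 := by
    rw [hωdef, ← Complex.exp_nat_mul]
    rw [show (q : ℂ) * (2 * Real.pi * Complex.I / q) = 2 * Real.pi * Complex.I by
      field_simp]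
    exact Complex.exp_two_pi_mul_I
  have hωhalf : ω ^ (q / 2) = -1 := by
    obtain ⟨t, ht⟩ := hq
    have ht0 : t ≠ 0 := by omega
    have htC : (t : ℂ) ≠ 0 := Nat.cast_ne_zero.mpr ht0
    have hq2 : q / 2 = t := by omega
    rw [hωdef, ← Complex.exp_nat_mul, hq2]
    rw [show (t : ℂ) * (2 * Real.pi * Complex.I / q) = Real.pi * Complex.I by
      rw [show (q : ℂ) = 2 * t by rw [ht]; push_cast; ring]
      field_simp]
    exact Complex.exp_pi_mul_I
  have hcval : ((q / 2 : ℕ) : ZMod q).val = q / 2 :=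
    ZMod.val_cast_of_lt (Nat.div_lt_self hq0 one_lt_two)
  set v : ZMod q := a σ r - a σ s with hvdef
  have hval : (v + ((q / 2 : ℕ) : ZMod q)).val = (v.val + q / 2) % q := by
    rw [ZMod.val_add, hcval]
  rw [hval]
  have hmod : ω ^ ((v.val + q / 2) % q) = ω ^ (v.val + q / 2) := by
    conv_rhs => rw [← Nat.mod_add_div (v.val + q / 2) q]
    rw [pow_add, pow_mul, hωq, one_pow, mul_one]
  rw [hmod, pow_add, hωhalf]
  ring
end

section
/- Let q be even, m ≥ 2, and let S_1,...,S_k partition {1,...,m−1} with bijections π_β: {1,...,m_β} → S_β. Define g(x_1,...,x_{m−1}) = (q/2) Σ_{β=1}^k Σ_{γ=1}^{m_β−1} x_{π_β(γ)} x_{π_β(γ+1)} and h = g + Σ_{l=1}^{m−1} λ_l x_l + λ_0 with λ_l ∈ ℤ_q. Suppose r, s < 2^{m−1} (binary vectors of length m−1) satisfy r_{π_β(1)} = s_{π_β(1)} for all β; let β̂ be the largest index such that r_{π_β(γ)} = s_{π_β(γ)} for all β < β̂ and all γ; let γ̂ be the smallest index with r_{π_{β̂}(γ̂)} ≠ s_{π_{β̂}(γ̂)};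 and let r', s' differ from r, s respectively only in bit π_{β̂}(γ̂−1). Then h_r − h_s − h_{r'} + h_{s'} ≡ q/2 (mod q). -/
lemma bitv_le_one (n i : ℕ) : bitv n i ≤ 1 :=
  Nat.lt_succ_iff.mp (Nat.mod_lt _ (by norm_num))

lemma half_cases (q : ℕ) (hq : Even q) (a b c : ℕ) (ha : a ≤ 1) (hb : b ≤ 1)
    (hc : c ≤ 1) (hbc : b ≠ c) :
    ((q / 2 : ℕ) : ZMod q) *
      ((a : ZMod q) * b - (a : ZMod q) * c - ((1 - a : ℕ) : ZMod q) * b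
        + ((1 - a : ℕ) : ZMod q) * c) = ((q / 2 : ℕ) : ZMod q) := by
  obtain ⟨t, rfl⟩ := hq
  have h2 : ((t + t) / 2 : ℕ) = t := by omega
  have h0 : ((t : ZMod (t + t)) + t) = 0 := by
    rw [← Nat.cast_add]; exact ZMod.natCast_self _
  rw [h2]
  interval_cases a <;> interval_cases b <;> interval_cases c <;> simp_all <;>
    first
      | linear_combination h0
      | linear_combination -h0
      | linear_combination 2 * h0
      | linear_combination -(2 : ZMod (t + t)) * h0
      | ring


theorem stmt_6 (q m k : ℕ) (hq : Even q) (hq0 : 0 < q) (hm : 2 ≤ m) (hk : 0 < k)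
    (S : Fin k → Finset ℕ)
    (hdisj : ∀ β β' : Fin k, β ≠ β' → Disjoint (S β) (S β'))
    (hcover : (Finset.univ : Finset (Fin k)).biUnion S = Finset.Icc 1 (m - 1))
    (π : Fin k → ℕ → ℕ)
    (hπ : ∀ β : Fin k, Set.BijOn (π β) (Set.Icc 1 (S β).card) (S β : Set ℕ))
    (lam : ℕ → ZMod q) (lam0 : ZMod q)
    (g h : ℕ → ZMod q)
    (hg : ∀ r, g r = ((q / 2 : ℕ) : ZMod q) *
        ∑ β : Fin k, ∑ γ ∈ Finset.Icc 1 ((S β).card - 1),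
          (bitv r (π β γ - 1) : ZMod q) * (bitv r (π β (γ + 1) - 1) : ZMod q))
    (hh : ∀ r, h r = g r +
        (∑ l ∈ Finset.Icc 1 (m - 1), lam l * (bitv r (l - 1) : ZMod q)) + lam0)
    (r s r' s' : ℕ)
    (hr : r < 2 ^ (m - 1)) (hs : s < 2 ^ (m - 1))
    (hfirst : ∀ β : Fin k, bitv r (π β 1 - 1) = bitv s (π β 1 - 1))
    (βh : Fin k) (γh : ℕ) (hγh : 2 ≤ γh) (hγhle : γh ≤ (S βh).card)
    -- βh is the largest index with agreement below it, γh the smallest differing position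
    (hbelow : ∀ β : Fin k, β < βh → ∀ γ, 1 ≤ γ → γ ≤ (S β).card →
        bitv r (π β γ - 1) = bitv s (π β γ - 1))
    (hγmin : ∀ γ, 1 ≤ γ → γ < γh → bitv r (π βh γ - 1) = bitv s (π βh γ - 1))
    (hγdiff : bitv r (π βh γh - 1) ≠ bitv s (π βh γh - 1))
    (hr' : bitv r' (π βh (γh - 1) - 1) = 1 - bitv r (π βh (γh - 1) - 1))
    (hs' : bitv s' (π βh (γh - 1) - 1) = 1 - bitv s (π βh (γh - 1) - 1))
    (hr'same : ∀ i, i ≠ π βh (γh - 1) - 1 → bitv r' i = bitv r i)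
    (hs'same : ∀ i, i ≠ π βh (γh - 1) - 1 → bitv s' i = bitv s i) :
    h r - h s - h r' + h s' = ((q / 2 : ℕ) : ZMod q) := by
  have hSpos : ∀ β : Fin k, ∀ x ∈ S β, 1 ≤ x := by
    intro β x hx
    have hx' : x ∈ Finset.Icc 1 (m - 1) := by
      rw [← hcover]
      exact Finset.mem_biUnion.mpr ⟨β, Finset.mem_univ β, hx⟩
    exact (Finset.mem_Icc.mp hx').1
  have hmem : ∀ β : Fin k, ∀ γ, 1 ≤ γ → γ ≤ (S β).card → π β γ ∈ S β :=
    fun β γ h1 h2 => (hπ β).mapsTo (Set.mem_Icc.mpr ⟨h1, h2⟩)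
  have hvmem : π βh (γh - 1) ∈ S βh := hmem βh _ (by omega) (by omega)
  have hvpos : 1 ≤ π βh (γh - 1) := hSpos βh _ hvmem
  set p := π βh (γh - 1) - 1 with hpdef
  set j := π βh γh - 1 with hjdef
  have hne : ∀ β : Fin k, ∀ γ, 1 ≤ γ → γ ≤ (S β).card →
      ¬(β = βh ∧ γ = γh - 1) → π β γ - 1 ≠ p := by
    intro β γ h1 h2 hor heq
    rw [hpdef] at heq
    have hu := hmem β γ h1 h2
    have hupos := hSpos β _ hu
    have heq' : π β γ = π βh (γh - 1) := by omega
    by_cases hb : β = βh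
    · subst hb
      have : γ = γh - 1 :=
        (hπ β).injOn (Set.mem_Icc.mpr ⟨h1, h2⟩)
          (Set.mem_Icc.mpr ⟨by omega, by omega⟩) heq'
      exact hor ⟨rfl, this⟩
    · exact Finset.disjoint_left.mp (hdisj β βh hb) hu (heq' ▸ hvmem)
  have hsa : bitv s p = bitv r p := by
    rw [hpdef]; exact (hγmin (γh - 1) (by omega) (by omega)).symm
  have hjne : j ≠ p := by
    rw [hjdef]; exact hne βh γh (by omega) hγhle (by omega)
  have hD0 : ∀ β : Fin k, ∀ γ ∈ Finset.Icc 1 ((S β).card - 1),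
      ¬(β = βh ∧ γ = γh - 1) →
      (bitv r (π β γ - 1) : ZMod q) * (bitv r (π β (γ + 1) - 1) : ZMod q)
      - (bitv s (π β γ - 1) : ZMod q) * (bitv s (π β (γ + 1) - 1) : ZMod q)
      - (bitv r' (π β γ - 1) : ZMod q) * (bitv r' (π β (γ + 1) - 1) : ZMod q)
      + (bitv s' (π β γ - 1) : ZMod q) * (bitv s' (π β (γ + 1) - 1) : ZMod q)
      = 0 := by
    intro β γ hγ hnot
    rw [Finset.mem_Icc] at hγ
    have hi1 : π β γ - 1 ≠ p := hne β γ (by omega) (by omega) hnot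
    by_cases hi2 : π β (γ + 1) - 1 = p
    · have hb2 : β = βh ∧ γ + 1 = γh - 1 := by
        by_contra hc
        exact hne β (γ + 1) (by omega) (by omega) hc hi2
      obtain ⟨rfl, hg2⟩ := hb2
      have hsi1 : bitv r (π β γ - 1) = bitv s (π β γ - 1) :=
        hγmin γ (by omega) (by omega)
      rw [hi2, hr'same _ hi1, hs'same _ hi1, hr', hs', hsa, ← hsi1]
      ring
    · rw [hr'same _ hi1, hs'same _ hi1, hr'same _ hi2, hs'same _ hi2]
      ring
  have key :
      (∑ β : Fin k, ∑ γ ∈ Finset.Icc 1 ((S β).card - 1),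
        (bitv r (π β γ - 1) : ZMod q) * (bitv r (π β (γ + 1) - 1) : ZMod q))
      - (∑ β : Fin k, ∑ γ ∈ Finset.Icc 1 ((S β).card - 1),
        (bitv s (π β γ - 1) : ZMod q) * (bitv s (π β (γ + 1) - 1) : ZMod q))
      - (∑ β : Fin k, ∑ γ ∈ Finset.Icc 1 ((S β).card - 1),
        (bitv r' (π β γ - 1) : ZMod q) * (bitv r' (π β (γ + 1) - 1) : ZMod q))
      + (∑ β : Fin k, ∑ γ ∈ Finset.Icc 1 ((S β).card - 1),
        (bitv s' (π β γ - 1) : ZMod q) * (bitv s' (π β (γ + 1) - 1) : ZMod q))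
      = (bitv r p : ZMod q) * (bitv r j : ZMod q)
        - (bitv r p : ZMod q) * (bitv s j : ZMod q)
        - ((1 - bitv r p : ℕ) : ZMod q) * (bitv r j : ZMod q)
        + ((1 - bitv r p : ℕ) : ZMod q) * (bitv s j : ZMod q) := by
    simp only [← Finset.sum_sub_distrib, ← Finset.sum_add_distrib]
    rw [Finset.sum_eq_single βh
      (fun β _ hβ => Finset.sum_eq_zero (fun γ hγ => hD0 β γ hγ (by tauto)))
      (fun hmem => absurd (Finset.mem_univ βh) hmem)]
    rw [Finset.sum_eq_single (γh - 1)
      (fun γ hγ hγne => hD0 βh γ hγ (by tauto))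
      (fun hmem => absurd (Finset.mem_Icc.mpr ⟨by omega, by omega⟩) hmem)]
    rw [show γh - 1 + 1 = γh from by omega]
    rw [← hpdef, ← hjdef, hr'same _ hjne, hs'same _ hjne, hr', hs', hsa]
  have hlin :
      (∑ l ∈ Finset.Icc 1 (m - 1), lam l * (bitv r (l - 1) : ZMod q))
      - (∑ l ∈ Finset.Icc 1 (m - 1), lam l * (bitv s (l - 1) : ZMod q))
      - (∑ l ∈ Finset.Icc 1 (m - 1), lam l * (bitv r' (l - 1) : ZMod q))
      + (∑ l ∈ Finset.Icc 1 (m - 1), lam l * (bitv s' (l - 1) : ZMod q))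
      = 0 := by
    simp only [← Finset.sum_sub_distrib, ← Finset.sum_add_distrib]
    apply Finset.sum_eq_zero
    intro l hl
    by_cases hlp : l - 1 = p
    · rw [hlp, hr', hs', hsa]
      ring
    · rw [hr'same _ hlp, hs'same _ hlp]
      ring
  have hfin := half_cases q hq (bitv r p) (bitv r j) (bitv s j)
    (bitv_le_one _ _) (bitv_le_one _ _) (bitv_le_one _ _) hγdiff
  rw [hh r, hh s, hh r', hh s', hg r, hg s, hg r', hg s']
  linear_combination ((q / 2 : ℕ) : ZMod q) * key + hlin + hfin
end
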